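/- arXiv:2302.05398 — 8 statements merged into one kernel-verified Lean document; each statement's English description precedes it below -/
import Mathlib

section
/- For integers d ≥ 2 and n ≥ 1, the polynomial equation (d-1)ρ^{d+1} + d·n·ρ^{d-1} - n = 0 has a unique positive real solution ρ, and this solution satisfies 0 < ρ < d^{-1/(d-1)}. -/
/-- For integers `d ≥ 2` and `n ≥ 1`, the equation
`(d-1)ρ^(d+1) + d n ρ^(d-1) - n = 0` has a unique positive real solution,
and every positive solution is smaller than `d^(-1/(d-1))`. -/
theorem unique_positive_root (d n : ℕ) (hd : 2 ≤ d) (hn : 1 ≤ n) :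
    (∃! ρ : ℝ, 0 < ρ ∧
      ((d : ℝ) - 1) * ρ ^ (d + 1) + (d : ℝ) * (n : ℝ) * ρ ^ (d - 1) - (n : ℝ) = 0) ∧
    (∀ ρ : ℝ, 0 < ρ →
      ((d : ℝ) - 1) * ρ ^ (d + 1) + (d : ℝ) * (n : ℝ) * ρ ^ (d - 1) - (n : ℝ) = 0 →
      ρ < (d : ℝ) ^ (-(1 : ℝ) / ((d : ℝ) - 1))) := by
  have hd1 : (1:ℝ) < (d:ℝ) := by exact_mod_cast lt_of_lt_of_le one_lt_two (by exact_mod_cast hd)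
  have hn0 : (0:ℝ) < (n:ℝ) := by exact_mod_cast hn
  have hdpos : (0:ℝ) < (d:ℝ) := by linarith
  set f : ℝ → ℝ := fun ρ => ((d : ℝ) - 1) * ρ ^ (d + 1) + (d : ℝ) * (n : ℝ) * ρ ^ (d - 1) - (n : ℝ) with hf
  have hmono : ∀ a b : ℝ, 0 ≤ a → a < b → f a < f b := by
    intro a b ha hab
    have h1 : a^(d+1) < b^(d+1) := pow_lt_pow_left₀ hab ha (by omega)
    have h2 : a^(d-1) < b^(d-1) := pow_lt_pow_left₀ hab ha (by omega)
    have hd0 : (0:ℝ) < (d:ℝ) - 1 := by linarith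
    have hdn : (0:ℝ) < (d:ℝ)*(n:ℝ) := by positivity
    simp only [hf]
    nlinarith
  have hcont : Continuous f := by fun_prop
  have h0 : f 0 < 0 := by
    have h1 : d + 1 ≠ 0 := by omega
    have h2 : d - 1 ≠ 0 := by omega
    simp [hf, zero_pow h1, zero_pow h2, hn0]
  have h1 : 0 < f 1 := by
    simp only [hf, one_pow, mul_one]
    nlinarith
  obtain ⟨ρ, hρmem, hρ⟩ := intermediate_value_Ioo (by norm_num : (0:ℝ) ≤ 1)
    hcont.continuousOn (Set.mem_Ioo.mpr ⟨h0, h1⟩)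
  -- the bound at λ
  set lam : ℝ := (d : ℝ) ^ (-(1 : ℝ) / ((d : ℝ) - 1)) with hlam
  have hlampos : 0 < lam := Real.rpow_pos_of_pos hdpos _
  have hlampow : lam ^ (d - 1) = 1 / (d:ℝ) := by
    rw [hlam, ← Real.rpow_natCast ((d:ℝ) ^ (-(1:ℝ)/((d:ℝ)-1))) (d-1),
      ← Real.rpow_mul hdpos.le]
    have hc : ((d - 1 : ℕ) : ℝ) = (d:ℝ) - 1 := by
      push_cast [Nat.cast_sub (by omega : 1 ≤ d)]; ring
    rw [hc]
    have : -(1:ℝ) / ((d:ℝ) - 1) * ((d:ℝ) - 1) = -1 :=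
      div_mul_cancel₀ _ (by linarith)
    rw [this, Real.rpow_neg_one]
    simp
  have hflam : 0 < f lam := by
    simp only [hf, hlampow]
    have : (d:ℝ) * (n:ℝ) * (1 / (d:ℝ)) = (n:ℝ) := by
      field_simp
    rw [this]
    have : 0 < ((d:ℝ) - 1) * lam ^ (d + 1) := by
      have := pow_pos hlampos (d+1); nlinarith
    linarith
  have hbound : ∀ x : ℝ, 0 < x → f x = 0 → x < lam := by
    intro x hx hfx
    by_contra h
    push_neg at h
    rcases eq_or_lt_of_le h with heq | hlt
    · rw [heq] at hflam; rw [hfx] at hflam; linarith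
    · have := hmono lam x hlampos.le hlt
      linarith
  constructor
  · refine ⟨ρ, ⟨hρmem.1, hρ⟩, ?_⟩
    intro y ⟨hy, hfy'⟩
    have hfy : f y = 0 := hfy'
    rcases lt_trichotomy y ρ with h | h | h
    · have := hmono y ρ hy.le h; rw [hρ, hfy] at this; linarith
    · exact h
    · have := hmono ρ y hρmem.1.le h; rw [hρ, hfy] at this; linarith
  · exact hbound
end

section
/- For integers d ≥ 2 and n ≥ 1, let ρ = ρ(d,n) be the unique positive root of (d-1)ρ^{d+1} + d·n·ρ^{d-1} - n = 0 and define η(d,n) := (ρ - ρ^d)/(ρ^{d+1} + n)^{d/(d+1)}. Then d^{-1/(d-1)}·(1 - 1/d)·(n+1)^{-d/(d+1)} ≤ η(d,n) ≤ d^{-1/(d-1)}·(1 - 1/d)·n^{-d/(d+1)} < 1. -/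
/-!
By Bernoulli's inequality `r ^ d` lies above its tangent line at `a = d ^ (-1 / (d - 1))`, so
`r - r ^ d ≤ a (1 - 1 / d)` for `r ≥ 0`; with denominator at least `n ^ (d / (d + 1))` this gives
the upper bound. The derivative of `f = f_{d,n}` is a negative multiple of the increasing
polynomial `critPoly d n`, whose root is `ρ`, so `f` decreases on `[ρ, ∞)`. Since `ρ ≤ a ≤ 1`,
`η = f ρ ≥ f a ≥ a (1 - 1 / d) / (n + 1) ^ (d / (d + 1))`.
-/

open Set

lemma pow_tangent_le (d : ℕ) {a r : ℝ} (ha : 0 < a) (hr : 0 ≤ r) :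
    a ^ (d + 1) + (d + 1) * a ^ d * (r - a) ≤ r ^ (d + 1) := by
  have bernoulli := one_add_mul_le_pow (show (-2 : ℝ) ≤ r / a - 1 by
    have := div_nonneg hr ha.le; linarith) (d + 1)
  have hscale := mul_le_mul_of_nonneg_left bernoulli (pow_nonneg ha.le (d + 1))
  rw [add_sub_cancel, ← mul_pow, mul_div_cancel₀ r ha.ne'] at hscale
  refine le_trans (le_of_eq ?_) hscale
  rw [pow_succ]
  field_simp
  push_cast
  ring

lemma sub_pow_le_of_mul_pow_eq_one {d : ℕ} (hd : 1 ≤ d) {a r : ℝ} (ha : 0 < a)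
    (had : d * a ^ (d - 1) = 1) (hr : 0 ≤ r) : r - r ^ d ≤ a * (1 - 1 / d) := by
  obtain ⟨e, rfl⟩ : ∃ e, d = e + 1 := ⟨d - 1, by omega⟩
  have htangent := pow_tangent_le e ha hr
  simp only [Nat.add_sub_cancel, Nat.cast_add, Nat.cast_one] at had ⊢
  rw [had, one_mul] at htangent
  rw [← eq_one_div_of_mul_eq_one_right had]
  linarith [pow_succ a e]

lemma mul_rpow_neg_one_div_pow {x : ℝ} (hx : 0 < x) {k : ℕ} (hk : k ≠ 0) :
    x * (x ^ (-1 / (k : ℝ))) ^ k = 1 := by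
  rw [neg_div, one_div, Real.rpow_neg hx.le, inv_pow, Real.rpow_inv_natCast_pow hx.le hk,
    mul_inv_cancel₀ hx.ne']

lemma HasDerivAt.div_rpow_const {A B : ℝ → ℝ} {A' B' x : ℝ} (c : ℝ) (hA : HasDerivAt A A' x)
    (hB : HasDerivAt B B' x) (hBx : 0 < B x) :
    HasDerivAt (fun y => A y / B y ^ c) ((A' * B x - c * A x * B') / B x ^ (c + 1)) x := by
  have hBc := Real.rpow_pos_of_pos hBx c
  refine (hA.div (hB.rpow_const (p := c) (Or.inl hBx.ne')) hBc.ne').congr_deriv ?_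
  rw [Real.rpow_add hBx, Real.rpow_sub hBx, Real.rpow_one]
  field_simp

noncomputable def etaFun (d : ℕ) (n r : ℝ) : ℝ :=
  (r - r ^ d) / (r ^ (d + 1) + n) ^ ((d : ℝ) / (d + 1))

def critPoly (d : ℕ) (n r : ℝ) : ℝ :=
  ((d : ℝ) - 1) * r ^ (d + 1) + d * n * r ^ (d - 1) - n

section

variable {d : ℕ} {n a : ℝ}

lemma hasDerivAt_etaFun (hd : 1 ≤ d) (hn : 0 ≤ n) {x : ℝ} (hx : 0 < x) :
    HasDerivAt (etaFun d n)
      (-critPoly d n x / (x ^ (d + 1) + n) ^ ((d : ℝ) / (d + 1) + 1)) x := by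
  obtain ⟨e, rfl⟩ : ∃ e, d = e + 1 := ⟨d - 1, by omega⟩
  have hA : HasDerivAt (fun r : ℝ => r - r ^ (e + 1)) (1 - (e + 1) * x ^ e) x :=
    ((hasDerivAt_id' x).sub (hasDerivAt_pow (e + 1) x)).congr_deriv (by simp)
  have hB : HasDerivAt (fun r : ℝ => r ^ (e + 1 + 1) + n) ((e + 2) * x ^ (e + 1)) x :=
    ((hasDerivAt_pow (e + 1 + 1) x).add_const n).congr_deriv (by push_cast; ring)
  refine (hA.div_rpow_const (((e + 1 : ℕ) : ℝ) / ((e + 1 : ℕ) + 1)) hB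
    (by positivity)).congr_deriv ?_
  simp only [critPoly, Nat.add_sub_cancel]
  push_cast
  field_simp
  ring

lemma critPoly_monotoneOn (hd : 1 ≤ d) (hn : 0 ≤ n) : MonotoneOn (critPoly d n) (Ici 0) := by
  intro x hx y _ hxy
  have hd1 : (0 : ℝ) ≤ d - 1 := by simp [Nat.one_le_cast.mpr hd]
  have h1 := pow_le_pow_left₀ (mem_Ici.mp hx) hxy (d + 1)
  have h2 := pow_le_pow_left₀ (mem_Ici.mp hx) hxy (d - 1)
  simp only [critPoly]
  gcongr

lemma etaFun_antitoneOn (hd : 1 ≤ d) (hn : 0 ≤ n) {ρ : ℝ} (hρ : 0 < ρ)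
    (hcrit : critPoly d n ρ = 0) : AntitoneOn (etaFun d n) (Ici ρ) := by
  have hderiv : ∀ x ∈ Ici ρ, HasDerivAt (etaFun d n) _ x := fun x hx =>
    hasDerivAt_etaFun hd hn (hρ.trans_le hx)
  refine antitoneOn_of_deriv_nonpos (convex_Ici ρ)
    (fun x hx => (hderiv x hx).continuousAt.continuousWithinAt)
    (fun x hx => (hderiv x (interior_subset hx)).differentiableAt.differentiableWithinAt)
    (fun x hx => ?_)
  have hx : ρ ≤ x := interior_subset hx
  have hx0 : 0 < x := hρ.trans_le hx
  have hcrit_x : 0 ≤ critPoly d n x :=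
    hcrit ▸ critPoly_monotoneOn hd hn (mem_Ici.mpr hρ.le) (mem_Ici.mpr hx0.le) hx
  rw [(hderiv x hx).deriv, neg_div, Left.neg_nonpos_iff]
  positivity

lemma le_of_critPoly_eq_zero (hd : 2 ≤ d) (hn : 0 < n) (ha : 0 ≤ a)
    (had : d * a ^ (d - 1) = 1) {ρ : ℝ} (hρ : 0 ≤ ρ) (hcrit : critPoly d n ρ = 0) : ρ ≤ a := by
  have hd1 : (1 : ℝ) ≤ d := by exact_mod_cast (by omega : 1 ≤ d)
  have hpow : ρ ^ (d - 1) ≤ a ^ (d - 1) := by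
    have : 0 ≤ ((d : ℝ) - 1) * ρ ^ (d + 1) := by
      have := sub_nonneg.mpr hd1; positivity
    have : d * ρ ^ (d - 1) * n ≤ d * a ^ (d - 1) * n := by
      simp only [critPoly] at hcrit; rw [had]; linarith
    exact le_of_mul_le_mul_left (le_of_mul_le_mul_right this hn) (by linarith)
  exact (pow_le_pow_iff_left₀ hρ ha (by omega)).mp hpow

lemma etaFun_le (hd : 1 ≤ d) (hn : 0 < n) (ha : 0 < a) (had : d * a ^ (d - 1) = 1)
    {r : ℝ} (hr : 0 ≤ r) : etaFun d n r ≤ a * (1 - 1 / d) / n ^ ((d : ℝ) / (d + 1)) := by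
  have hM : 0 ≤ a * (1 - 1 / d) :=
    mul_nonneg ha.le (sub_nonneg.mpr (div_le_one_of_le₀ (by exact_mod_cast hd) (by positivity)))
  refine div_le_div₀ hM (sub_pow_le_of_mul_pow_eq_one hd ha had hr) (by positivity) ?_
  gcongr
  exact le_add_of_nonneg_left (by positivity)

lemma div_le_etaFun (hd : 2 ≤ d) (hn : 0 < n) (ha : 0 < a) (ha1 : a ≤ 1)
    (had : d * a ^ (d - 1) = 1) {ρ : ℝ} (hρ : 0 < ρ) (hcrit : critPoly d n ρ = 0) :
    a * (1 - 1 / d) / (n + 1) ^ ((d : ℝ) / (d + 1)) ≤ etaFun d n ρ := by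
  have hρa := le_of_critPoly_eq_zero hd hn ha.le had hρ.le hcrit
  have hmax : a - a ^ d = a * (1 - 1 / d) := by
    obtain ⟨e, rfl⟩ : ∃ e, d = e + 1 := ⟨d - 1, by omega⟩
    simp only [Nat.add_sub_cancel] at had
    rw [← eq_one_div_of_mul_eq_one_right had, pow_succ]
    ring
  have hM : 0 ≤ a * (1 - 1 / d) := hmax ▸ sub_nonneg.mpr (pow_le_of_le_one ha.le ha1 (by omega))
  calc a * (1 - 1 / d) / (n + 1) ^ ((d : ℝ) / (d + 1))
      ≤ etaFun d n a := by
        rw [etaFun, hmax]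
        gcongr _ / ?_ ^ _
        linarith [pow_le_one₀ (n := d + 1) ha.le ha1]
    _ ≤ etaFun d n ρ :=
        etaFun_antitoneOn (by omega) hn.le hρ hcrit (mem_Ici.mpr le_rfl) (mem_Ici.mpr hρa) hρa

end

/-- Bounds on `η(d,n) = (ρ - ρ^d)/(ρ^(d+1)+n)^(d/(d+1))`, where `ρ` is the unique
positive root of `(d-1)ρ^(d+1) + d n ρ^(d-1) - n = 0`. -/
theorem eta_bounds (d n : ℕ) (hd : 2 ≤ d) (hn : 1 ≤ n) (ρ : ℝ) (hρ : 0 < ρ)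
    (heq : ((d : ℝ) - 1) * ρ ^ (d + 1) + (d : ℝ) * (n : ℝ) * ρ ^ (d - 1) - (n : ℝ) = 0) :
    (d : ℝ) ^ (-(1 : ℝ) / ((d : ℝ) - 1)) * (1 - 1 / (d : ℝ)) *
        ((n : ℝ) + 1) ^ (-(d : ℝ) / ((d : ℝ) + 1)) ≤
      (ρ - ρ ^ d) / (ρ ^ (d + 1) + (n : ℝ)) ^ ((d : ℝ) / ((d : ℝ) + 1)) ∧
    (ρ - ρ ^ d) / (ρ ^ (d + 1) + (n : ℝ)) ^ ((d : ℝ) / ((d : ℝ) + 1)) ≤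
      (d : ℝ) ^ (-(1 : ℝ) / ((d : ℝ) - 1)) * (1 - 1 / (d : ℝ)) *
        (n : ℝ) ^ (-(d : ℝ) / ((d : ℝ) + 1)) ∧
    (d : ℝ) ^ (-(1 : ℝ) / ((d : ℝ) - 1)) * (1 - 1 / (d : ℝ)) *
        (n : ℝ) ^ (-(d : ℝ) / ((d : ℝ) + 1)) < 1 := by
  have hn0 : (0 : ℝ) < n := by exact_mod_cast hn
  have hd1 : (1 : ℝ) < d := by exact_mod_cast hd
  set a := (d : ℝ) ^ (-(1 : ℝ) / ((d : ℝ) - 1))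
  have ha : 0 < a := by positivity
  have ha1 : a ≤ 1 := Real.rpow_le_one_of_one_le_of_nonpos hd1.le
    (div_nonpos_of_nonpos_of_nonneg (by norm_num) (by linarith))
  have had : d * a ^ (d - 1) = 1 := by
    convert mul_rpow_neg_one_div_pow (by positivity : (0 : ℝ) < d) (k := d - 1) (by omega)
    push_cast [Nat.cast_sub (by omega : 1 ≤ d)]
    rfl
  have hinv (x : ℝ) (hx : 0 ≤ x) : x ^ (-(d : ℝ) / (d + 1)) = 1 / x ^ ((d : ℝ) / (d + 1)) := by
    rw [neg_div, Real.rpow_neg hx, one_div]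
  rw [hinv _ (by positivity), hinv _ hn0.le, mul_one_div, mul_one_div]
  refine ⟨div_le_etaFun hd hn0 ha ha1 had hρ heq, etaFun_le (by omega) hn0 ha had hρ.le, ?_⟩
  have hM : a * (1 - 1 / d) < 1 := by
    have : 0 < 1 / (d : ℝ) := by positivity
    nlinarith
  have hn1 : 1 ≤ (n : ℝ) ^ ((d : ℝ) / (d + 1)) :=
    Real.one_le_rpow (by exact_mod_cast hn) (by positivity)
  rw [div_lt_one (by linarith)]
  linarith
end

section
/- For integers d ≥ 2 and n ≥ 1, the quantity η(d,n)^{-(d+1)} satisfies e·d·n^d ≤ η(d,n)^{-(d+1)} ≤ 32e·d·n^d, where η(d,n) is the maximum of f_{d,n}(r) = (r - r^d)/(r^{d+1}+n)^{d/(d+1)} over r ≥ 0. -/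
/-!
Write `d = k + 1` and `t = ρ ^ k`. The root equation is exactly
`k (ρ ^ (k + 2) + n) = (k + 1) n (1 - t)`, which turns `η(d,n) ^ (-(d+1))` into the closed form
`d n ^ d (k + 1) ^ k / (k ^ (k + 1) ρ ^ (k + 2) (1 - t))`. The same equation confines `t` to
`[1 / (2k + 1), 1 / (k + 1)]`, the left end because `n ≥ 1`. The lower bound then follows from
`e k ^ (k + 1) ≤ (k + 1) ^ (k + 1)`. For the upper bound one raises to the `k`-th power, so that
`ρ ^ (k (k + 2)) = t ^ (k + 2)` and the remaining estimate is polynomial in `t`, and concludes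
with `(k + 1) ^ k ≤ e k ^ k`.
-/

open Real

lemma inv_div_rpow_pow_succ (d : ℕ) {A B : ℝ} (hA : 0 ≤ A) :
    ((B / A ^ ((d : ℝ) / ((d : ℝ) + 1)))⁻¹) ^ (d + 1) = A ^ d / B ^ (d + 1) := by
  rw [inv_div, div_pow, ← rpow_natCast (A ^ _), ← rpow_mul hA, Nat.cast_add_one,
    div_mul_cancel₀ _ (by positivity), rpow_natCast]

lemma exp_one_mul_pow_succ_le_pow_succ (k : ℕ) :
    exp 1 * (k : ℝ) ^ (k + 1) ≤ ((k : ℝ) + 1) ^ (k + 1) := by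
  have hk : (0 : ℝ) < k + 1 := by positivity
  have h := one_sub_div_pow_le_exp_neg (n := k + 1) (t := 1) (by simp)
  rw [Nat.cast_add_one, one_sub_div hk.ne', add_sub_cancel_right, div_pow,
    div_le_iff₀ (by positivity)] at h
  calc exp 1 * (k : ℝ) ^ (k + 1) ≤ exp 1 * (exp (-1) * ((k : ℝ) + 1) ^ (k + 1)) := by gcongr
    _ = ((k : ℝ) + 1) ^ (k + 1) := by rw [← mul_assoc, ← exp_add]; simp

lemma succ_pow_le_exp_one_mul_pow (k : ℕ) : ((k : ℝ) + 1) ^ k ≤ exp 1 * (k : ℝ) ^ k := by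
  rcases k.eq_zero_or_pos with rfl | hk
  · simp [one_le_exp zero_le_one]
  have h := mul_le_mul_of_nonneg_right (one_add_inv_pow_le_exp (n := k))
    (pow_nonneg (Nat.cast_nonneg k) k)
  rwa [← mul_pow, add_mul, one_mul, inv_mul_cancel₀ (by positivity)] at h

lemma succ_pow_mul_two_mul_add_one_pow_le {k : ℕ} (hk : 1 ≤ k) :
    ((k : ℝ) + 1) ^ (k * k) * (2 * k + 1) ^ (2 * k + 2) ≤
      (64 * exp 1) ^ k * k ^ (k * (k + 2)) := by
  obtain rfl | hk2 := hk.eq_or_lt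
  -- the estimate below is too lossy at `k = 1`, where the claim `162 ≤ 64 e` is nearly tight
  · norm_num
    linarith [exp_one_gt_d9]
  have h_sq_le_pow : (2 * (k : ℝ) + 1) ^ 2 ≤ 9 ^ k := by
    have h3 := one_add_mul_le_pow (a := (2 : ℝ)) (by norm_num) k
    norm_num at h3
    calc (2 * (k : ℝ) + 1) ^ 2 ≤ (3 ^ k) ^ 2 := by gcongr; linarith
      _ = 9 ^ k := by rw [← pow_mul, mul_comm, pow_mul]; norm_num
  have h_sq_le_sq : (2 * (k : ℝ) + 1) ^ 2 ≤ 25 / 4 * k ^ 2 := by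
    have : (2 : ℝ) ≤ k := by exact_mod_cast hk2
    nlinarith
  have he : ((k : ℝ) + 1) ^ (k * k) ≤ exp 1 ^ k * k ^ (k * k) := by
    rw [pow_mul, pow_mul, ← mul_pow]
    gcongr
    exact succ_pow_le_exp_one_mul_pow k
  calc ((k : ℝ) + 1) ^ (k * k) * (2 * k + 1) ^ (2 * k + 2)
      = ((k : ℝ) + 1) ^ (k * k) * (((2 * k + 1) ^ 2) ^ k * (2 * k + 1) ^ 2) := by
        rw [pow_add, pow_mul (2 * (k : ℝ) + 1) 2 k]
    _ ≤ (exp 1 ^ k * k ^ (k * k)) * ((25 / 4 * k ^ 2) ^ k * 9 ^ k) := by gcongr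
    _ = (225 / 4 * exp 1) ^ k * k ^ (k * (k + 2)) := by
        rw [show (225 / 4 : ℝ) = 25 / 4 * 9 by norm_num, mul_pow, mul_pow, mul_pow, ← pow_mul]
        ring
    _ ≤ (64 * exp 1) ^ k * k ^ (k * (k + 2)) := by gcongr; norm_num

lemma two_mul_pow_le_mul_pow_mul_one_sub_pow (k : ℕ) {t : ℝ} (h₁ : 1 ≤ (2 * k + 1) * t)
    (h₂ : (2 * k + 1) * t ≤ 2 * k) :
    (2 * (k : ℝ)) ^ k ≤ (2 * k + 1) ^ (2 * k + 2) * t ^ (k + 2) * (1 - t) ^ k := by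
  set a := 2 * (k : ℝ) + 1
  -- with `s = a t ∈ [1, 2k]`, `s (a - s) - 2k = (s - 1) (2k - s) ≥ 0`
  have hs : 2 * (k : ℝ) ≤ (a * t) * (a * (1 - t)) := by nlinarith
  calc (2 * (k : ℝ)) ^ k ≤ (a * t) ^ 2 * ((a * t) * (a * (1 - t))) ^ k :=
        (one_mul _).symm.le.trans (mul_le_mul (one_le_pow₀ h₁)
          (pow_le_pow_left₀ (by positivity) hs k) (by positivity) (by positivity))
    _ = a ^ (2 * k + 2) * t ^ (k + 2) * (1 - t) ^ k := by
        rw [mul_pow (a * t), mul_pow a (1 - t), mul_pow a t]; ring_nf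

lemma lt_one_of_succ_mul_pow_le_one {k : ℕ} {ρ : ℝ} (hk : 1 ≤ k) (hρ : 0 ≤ ρ)
    (h : (k + 1) * ρ ^ k ≤ 1) : ρ < 1 := by
  have hk' : (1 : ℝ) ≤ k := by exact_mod_cast hk
  refine (pow_lt_one_iff_of_nonneg hρ (n := k) (by omega)).mp ?_
  nlinarith [pow_nonneg hρ k]

section Root

variable {k : ℕ} {n ρ : ℝ} (hroot : k * ρ ^ (k + 2) + (k + 1) * n * ρ ^ k - n = 0)
include hroot

lemma succ_mul_pow_le_one (hn : 0 < n) (hρ : 0 ≤ ρ) : (k + 1) * ρ ^ k ≤ 1 := by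
  have : 0 ≤ n * (1 - (k + 1) * ρ ^ k) := by
    rw [show n * (1 - (k + 1) * ρ ^ k) = k * ρ ^ (k + 2) by linear_combination -hroot]
    positivity
  nlinarith

lemma one_le_two_mul_add_one_mul_pow (hn : 1 ≤ n) (hρ₀ : 0 ≤ ρ) (hρ₁ : ρ ≤ 1) :
    1 ≤ (2 * k + 1) * ρ ^ k := by
  have ht := succ_mul_pow_le_one hroot (by linarith) hρ₀
  have hρ2 : ρ ^ (k + 2) ≤ ρ ^ k := pow_le_pow_of_le_one hρ₀ hρ₁ (by omega)
  have : 1 - (k + 1) * ρ ^ k ≤ n * (1 - (k + 1) * ρ ^ k) := by nlinarith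
  nlinarith [mul_le_mul_of_nonneg_left hρ2 (Nat.cast_nonneg (α := ℝ) k)]

lemma eta_inv_pow_eq (hk : 1 ≤ k) (hρ : ρ ≠ 0) (ht : ρ ^ k ≠ 1) :
    (ρ ^ (k + 2) + n) ^ (k + 1) / (ρ - ρ ^ (k + 1)) ^ (k + 2) =
      (k + 1) * n ^ (k + 1) * ((k + 1) ^ k / (k ^ (k + 1) * ρ ^ (k + 2) * (1 - ρ ^ k))) := by
  have hk0 : (k : ℝ) ≠ 0 := by positivity
  have hA : k * (ρ ^ (k + 2) + n) = (k + 1) * n * (1 - ρ ^ k) := by linear_combination hroot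
  have h1t : 1 - ρ ^ k ≠ 0 := sub_ne_zero.mpr (Ne.symm ht)
  rw [show ρ - ρ ^ (k + 1) = ρ * (1 - ρ ^ k) by ring, mul_div_assoc',
    div_eq_div_iff (by positivity) (by positivity)]
  set u := 1 - ρ ^ k
  calc (ρ ^ (k + 2) + n) ^ (k + 1) * (k ^ (k + 1) * ρ ^ (k + 2) * u)
      = (k * (ρ ^ (k + 2) + n)) ^ (k + 1) * ρ ^ (k + 2) * u := by rw [mul_pow]; ring
    _ = _ := by rw [hA, mul_pow, mul_pow, mul_pow]; ring

end Root

section Bounds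

variable {k : ℕ} {ρ : ℝ} (hk : 1 ≤ k) (hρ : 0 < ρ) (ht : (k + 1) * ρ ^ k ≤ 1)
include hk hρ ht

lemma mul_pow_mul_one_sub_pow_pos : 0 < (k : ℝ) ^ (k + 1) * ρ ^ (k + 2) * (1 - ρ ^ k) := by
  have ht₁ : 0 < 1 - ρ ^ k :=
    sub_pos.mpr (pow_lt_one₀ hρ.le (lt_one_of_succ_mul_pow_le_one hk hρ.le ht) (by omega))
  have hk₀ : (0 : ℝ) < k := by exact_mod_cast hk
  positivity

lemma exp_one_le_succ_pow_div :
    exp 1 ≤ (k + 1) ^ k / (k ^ (k + 1) * ρ ^ (k + 2) * (1 - ρ ^ k)) := by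
  rw [le_div_iff₀ (mul_pow_mul_one_sub_pow_pos hk hρ ht)]
  have hρ1 := (lt_one_of_succ_mul_pow_le_one hk hρ.le ht).le
  have ht₀ : 0 ≤ 1 - ρ ^ k := sub_nonneg.mpr (pow_le_one₀ hρ.le hρ1)
  have hsmall : ρ ^ 2 * (1 - ρ ^ k) ≤ 1 :=
    mul_le_one₀ (pow_le_one₀ hρ.le hρ1) ht₀ (by linarith [pow_nonneg hρ.le k])
  calc exp 1 * (k ^ (k + 1) * ρ ^ (k + 2) * (1 - ρ ^ k))
      = (exp 1 * k ^ (k + 1)) * ρ ^ k * (ρ ^ 2 * (1 - ρ ^ k)) := by ring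
    _ ≤ (k + 1) ^ (k + 1) * ρ ^ k * 1 :=
        mul_le_mul (mul_le_mul_of_nonneg_right (exp_one_mul_pow_succ_le_pow_succ k)
          (pow_nonneg hρ.le k)) hsmall (by positivity) (by positivity)
    _ = (k + 1) ^ k * ((k + 1) * ρ ^ k) := by ring
    _ ≤ (k + 1) ^ k := mul_le_of_le_one_right (by positivity) ht

lemma succ_pow_div_le_mul_exp_one (h₁ : 1 ≤ (2 * k + 1) * ρ ^ k) :
    (k + 1) ^ k / (k ^ (k + 1) * ρ ^ (k + 2) * (1 - ρ ^ k)) ≤ 32 * exp 1 := by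
  have hD := mul_pow_mul_one_sub_pow_pos hk hρ ht
  rw [div_le_iff₀ hD]
  refine le_of_pow_le_pow_left₀ (n := k) (by omega) (by positivity) ?_
  have hk' : (1 : ℝ) ≤ k := by exact_mod_cast hk
  have h₂ : (2 * k + 1) * ρ ^ k ≤ 2 * k := by nlinarith
  have ha : (0 : ℝ) < (2 * k + 1) ^ (2 * k + 2) := by positivity
  refine le_of_mul_le_mul_right ?_ ha
  calc ((k + 1 : ℝ) ^ k) ^ k * (2 * k + 1) ^ (2 * k + 2)
      = (k + 1 : ℝ) ^ (k * k) * (2 * k + 1) ^ (2 * k + 2) := by rw [← pow_mul]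
    _ ≤ (64 * exp 1) ^ k * k ^ (k * (k + 2)) := succ_pow_mul_two_mul_add_one_pow_le hk
    _ = (32 * exp 1) ^ k * (k : ℝ) ^ ((k + 1) * k) * (2 * k) ^ k := by
        rw [show 64 * exp 1 = 2 * (32 * exp 1) by ring, mul_pow]; ring
    _ ≤ (32 * exp 1) ^ k * (k : ℝ) ^ ((k + 1) * k) *
          ((2 * k + 1) ^ (2 * k + 2) * (ρ ^ k) ^ (k + 2) * (1 - ρ ^ k) ^ k) := by
        gcongr
        exact two_mul_pow_le_mul_pow_mul_one_sub_pow k h₁ h₂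
    _ = (32 * exp 1 * (k ^ (k + 1) * ρ ^ (k + 2) * (1 - ρ ^ k))) ^ k *
          (2 * k + 1) ^ (2 * k + 2) := by
        rw [mul_pow (32 * exp 1), mul_pow (_ * ρ ^ (k + 2)), mul_pow ((k : ℝ) ^ (k + 1))]; ring

end Bounds

/-- Bounds `e d n^d ≤ η(d,n)^{-(d+1)} ≤ 32 e d n^d`, where `η(d,n)` is the maximum of
`f_{d,n}(r) = (r - r^d)/(r^(d+1)+n)^(d/(d+1))` over `r ≥ 0`, attained at the unique
positive root `ρ` of `(d-1)ρ^(d+1) + d n ρ^(d-1) - n = 0`. -/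
theorem eta_inv_bounds (d n : ℕ) (hd : 2 ≤ d) (hn : 1 ≤ n) (ρ : ℝ) (hρ : 0 < ρ)
    (heq : ((d : ℝ) - 1) * ρ ^ (d + 1) + (d : ℝ) * (n : ℝ) * ρ ^ (d - 1) - (n : ℝ) = 0) :
    Real.exp 1 * (d : ℝ) * (n : ℝ) ^ d ≤
        (((ρ - ρ ^ d) / (ρ ^ (d + 1) + (n : ℝ)) ^ ((d : ℝ) / ((d : ℝ) + 1)))⁻¹) ^ (d + 1) ∧
    (((ρ - ρ ^ d) / (ρ ^ (d + 1) + (n : ℝ)) ^ ((d : ℝ) / ((d : ℝ) + 1)))⁻¹) ^ (d + 1) ≤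
        32 * Real.exp 1 * (d : ℝ) * (n : ℝ) ^ d := by
  rw [inv_div_rpow_pow_succ d (by positivity)]
  obtain ⟨k, rfl⟩ : ∃ k, d = k + 1 := ⟨d - 1, by omega⟩
  have hk : 1 ≤ k := by omega
  have hn' : (1 : ℝ) ≤ n := by exact_mod_cast hn
  have hroot : k * ρ ^ (k + 2) + (k + 1) * n * ρ ^ k - n = 0 := by simpa using heq
  have ht := succ_mul_pow_le_one hroot (by linarith) hρ.le
  have hρ1 := lt_one_of_succ_mul_pow_le_one hk hρ.le ht
  have h₁ := one_le_two_mul_add_one_mul_pow hroot hn' hρ.le hρ1.le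
  rw [eta_inv_pow_eq hroot hk hρ.ne' (pow_lt_one₀ hρ.le hρ1 (by omega)).ne, Nat.cast_add_one]
  have hc : (0 : ℝ) ≤ (k + 1) * n ^ (k + 1) := by positivity
  constructor
  · linarith [mul_le_mul_of_nonneg_left (exp_one_le_succ_pow_div hk hρ ht) hc]
  · linarith [mul_le_mul_of_nonneg_left (succ_pow_div_le_mul_exp_one hk hρ ht h₁) hc]
end

section
/- For integers d ≥ 2 and n ≥ 1, the function f_{d,n}(r) = (r - r^d)/(r^{d+1}+n)^{d/(d+1)} is strictly increasing on [0, ρ] and strictly decreasing on [ρ, ∞), where ρ = ρ(d,n) is the unique positive root of (d-1)ρ^{d+1} + dnρ^{d-1} - n = 0. -/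
/-!
Writing `A = r ^ (d + 1) + n` and `c = d / (d + 1)`, the exponent is chosen so that
`c * A' = d * r ^ d` cancels the top-degree terms in the derivative of `(r - r ^ d) * A ^ (-c)`,
leaving `f' = -P(r) / A ^ (c + 1)` with `P(r) = (d - 1) r ^ (d + 1) + d n r ^ (d - 1) - n`.
For `d ≥ 2` the polynomial `P` is strictly increasing on `[0, ∞)`, so it is negative before its
root `ρ` and positive after it.
-/

open Real Set

noncomputable def profile (d : ℕ) (a r : ℝ) : ℝ :=
  (r - r ^ d) / (r ^ (d + 1) + a) ^ ((d : ℝ) / ((d : ℝ) + 1))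

def criticalPoly (d : ℕ) (a r : ℝ) : ℝ :=
  ((d : ℝ) - 1) * r ^ (d + 1) + (d : ℝ) * a * r ^ (d - 1) - a

section

variable {d : ℕ} {a : ℝ}

theorem hasDerivAt_profile (hd : 1 ≤ d) {r : ℝ} (hA : 0 < r ^ (d + 1) + a) :
    HasDerivAt (profile d a)
      (-criticalPoly d a r / (r ^ (d + 1) + a) ^ ((d : ℝ) / ((d : ℝ) + 1) + 1)) r := by
  set A := r ^ (d + 1) + a
  set c : ℝ := (d : ℝ) / ((d : ℝ) + 1) with hc
  have hnum : HasDerivAt (fun r : ℝ => r - r ^ d) (1 - d * r ^ (d - 1)) r :=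
    (hasDerivAt_id' r).sub (hasDerivAt_pow d r)
  have hden : HasDerivAt (fun r : ℝ => (r ^ (d + 1) + a) ^ c)
      ((d + 1 : ℕ) * r ^ d * c * A ^ (c - 1)) r := by
    simpa using ((hasDerivAt_pow (d + 1) r).add_const a).rpow_const (p := c) (Or.inl hA.ne')
  refine (hnum.div hden (rpow_pos_of_pos hA c).ne').congr_deriv ?_
  have hpow : r ^ d = r ^ (d - 1) * r := by rw [← pow_succ, Nat.sub_add_cancel hd]
  have hc1 : c * ((d : ℝ) + 1) = d := by rw [hc]; field_simp
  have hAc : A ^ c = A ^ (c - 1) * A := by rw [← rpow_add_one hA.ne']; ring_nf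
  rw [rpow_add_one hA.ne', hAc]
  field_simp
  simp only [criticalPoly, A, pow_succ r d, hpow]
  push_cast
  linear_combination (-(r ^ (d - 1) * r * (r - r ^ (d - 1) * r))) * hc1

theorem strictMonoOn_criticalPoly (hd : 2 ≤ d) (ha : 0 ≤ a) :
    StrictMonoOn (criticalPoly d a) (Ici 0) := by
  intro x hx y _ hxy
  have hd1 : (1 : ℝ) ≤ d - 1 := by
    have : (2 : ℝ) ≤ d := by exact_mod_cast hd
    linarith
  have htop : x ^ (d + 1) < y ^ (d + 1) := pow_lt_pow_left₀ hxy hx (by omega)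
  have hlow : x ^ (d - 1) ≤ y ^ (d - 1) := pow_le_pow_left₀ hx hxy.le _
  have hda : (0 : ℝ) ≤ d * a := by positivity
  simp only [criticalPoly]
  nlinarith [mul_le_mul_of_nonneg_left hlow hda]

theorem hasDerivAt_profile_of_nonneg (hd : 1 ≤ d) (ha : 0 < a) {r : ℝ} (hr : 0 ≤ r) :
    HasDerivAt (profile d a)
      (-criticalPoly d a r / (r ^ (d + 1) + a) ^ ((d : ℝ) / ((d : ℝ) + 1) + 1)) r :=
  hasDerivAt_profile hd (by positivity)

theorem continuousOn_profile (hd : 1 ≤ d) (ha : 0 < a) : ContinuousOn (profile d a) (Ici 0) :=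
  fun _ hr => (hasDerivAt_profile_of_nonneg hd ha hr).continuousAt.continuousWithinAt

theorem strictMonoOn_profile (hd : 2 ≤ d) (ha : 0 < a) {ρ : ℝ} (hρ : criticalPoly d a ρ = 0) :
    StrictMonoOn (profile d a) (Icc 0 ρ) := by
  have hd1 : 1 ≤ d := by omega
  refine strictMonoOn_of_hasDerivWithinAt_pos (convex_Icc 0 ρ)
    ((continuousOn_profile hd1 ha).mono Icc_subset_Ici_self)
    (fun _ hx => (hasDerivAt_profile_of_nonneg hd1 ha (interior_subset hx).1).hasDerivWithinAt)
    fun x hx => ?_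
  rw [interior_Icc] at hx
  have hP : criticalPoly d a x < 0 :=
    hρ ▸ strictMonoOn_criticalPoly hd ha.le hx.1.le (hx.1.le.trans hx.2.le) hx.2
  have hA : 0 < x ^ (d + 1) + a := by have := hx.1; positivity
  exact div_pos (neg_pos.2 hP) (rpow_pos_of_pos hA _)

theorem strictAntiOn_profile (hd : 2 ≤ d) (ha : 0 < a) {ρ : ℝ} (hρ₀ : 0 ≤ ρ)
    (hρ : criticalPoly d a ρ = 0) : StrictAntiOn (profile d a) (Ici ρ) := by
  have hd1 : 1 ≤ d := by omega
  refine strictAntiOn_of_hasDerivWithinAt_neg (convex_Ici ρ)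
    ((continuousOn_profile hd1 ha).mono (Ici_subset_Ici.2 hρ₀))
    (fun _ hx => (hasDerivAt_profile_of_nonneg hd1 ha
      (hρ₀.trans (interior_subset hx))).hasDerivWithinAt) fun x hx => ?_
  rw [interior_Ici] at hx
  have hx₀ : 0 ≤ x := hρ₀.trans hx.le
  have hP : 0 < criticalPoly d a x := hρ ▸ strictMonoOn_criticalPoly hd ha.le hρ₀ hx₀ hx
  have hA : 0 < x ^ (d + 1) + a := by positivity
  exact div_neg_of_neg_of_pos (neg_neg_of_pos hP) (rpow_pos_of_pos hA _)

end

/-- The function `f_{d,n}(r) = (r - r^d)/(r^(d+1)+n)^(d/(d+1))` is strictly increasing on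
`[0, ρ]` and strictly decreasing on `[ρ, ∞)`, where `ρ` is the unique positive root of
`(d-1)ρ^(d+1) + d n ρ^(d-1) - n = 0`. -/
theorem f_monotone (d n : ℕ) (hd : 2 ≤ d) (hn : 1 ≤ n) (ρ : ℝ) (hρ : 0 < ρ)
    (heq : ((d : ℝ) - 1) * ρ ^ (d + 1) + (d : ℝ) * (n : ℝ) * ρ ^ (d - 1) - (n : ℝ) = 0) :
    StrictMonoOn (fun r : ℝ => (r - r ^ d) / (r ^ (d + 1) + (n : ℝ)) ^ ((d : ℝ) / ((d : ℝ) + 1)))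
      (Set.Icc 0 ρ) ∧
    StrictAntiOn (fun r : ℝ => (r - r ^ d) / (r ^ (d + 1) + (n : ℝ)) ^ ((d : ℝ) / ((d : ℝ) + 1)))
      (Set.Ici ρ) := by
  have hn' : (0 : ℝ) < n := by exact_mod_cast hn
  exact ⟨strictMonoOn_profile hd hn' heq, strictAntiOn_profile hd hn' hρ.le heq⟩
end

section
/- For every integer d ≥ 2 and n ≥ 1, the function f_{d,n}(r) = (r - r^d)/(r^{d+1}+n)^{d/(d+1)} is strictly concave on the interval [0,1]. -/
/-!
Write `f = s ^ (-p) * u` with `s r = r ^ (d + 1) + n`, `u r = r - r ^ d` and `p = d / (d + 1)`.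
Since `(s ^ q * A)' = s ^ (q - 1) * (q * s' * A + s * A')` and `p * s' = d * r ^ d`,
the polynomial factors collapse: `f' = s ^ (-p - 1) * A` with
`A = n - n d r ^ (d - 1) - (d - 1) r ^ (d + 1)`, and `f'' = s ^ (-p - 2) * N` with
`N = d (d - 1) r ^ (2d + 1) + n d (d + 2) r ^ (2d - 1) - n d (d + 2) r ^ d - n² d (d - 1) r ^ (d - 2)`.
On `(0, 1)` each positive monomial of `N` is dominated by a negative one
(`r ^ (2d + 1) < n² r ^ (d - 2)` as `n ≥ 1`, and `r ^ (2d - 1) ≤ r ^ d`), so `f'' < 0`.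
-/

open Real Set Topology

lemma strictConcaveOn_of_hasDerivAt2_neg {D : Set ℝ} (hD : Convex ℝ D) {f f' f'' : ℝ → ℝ}
    (hf : ContinuousOn f D) (hf' : ∀ x ∈ interior D, HasDerivAt f (f' x) x)
    (hf'' : ∀ x ∈ interior D, HasDerivAt f' (f'' x) x) (hneg : ∀ x ∈ interior D, f'' x < 0) :
    StrictConcaveOn ℝ D f := by
  refine strictConcaveOn_of_deriv2_neg hD hf fun x hx => ?_
  have hderiv : deriv f =ᶠ[𝓝 x] f' := by
    filter_upwards [isOpen_interior.mem_nhds hx] with y hy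
    exact (hf' y hy).deriv
  rw [Function.iterate_succ_apply, Function.iterate_one, hderiv.deriv_eq, (hf'' x hx).deriv]
  exact hneg x hx

lemma HasDerivAt.rpow_const_mul {s A : ℝ → ℝ} {s' A' q x : ℝ} (hs : HasDerivAt s s' x)
    (hA : HasDerivAt A A' x) (hsx : 0 < s x) :
    HasDerivAt (fun r => s r ^ q * A r) (s x ^ (q - 1) * (q * s' * A x + s x * A')) x := by
  refine ((hs.rpow_const (p := q) (Or.inl hsx.ne')).mul hA).congr_deriv ?_
  rw [rpow_sub_one hsx.ne']
  field_simp

-- Stated for `d = m + 2`, so that every exponent is a natural number without truncated subtraction.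
section

variable {m : ℕ} {n p x : ℝ}

lemma hasDerivAt_f_denom (m : ℕ) (n x : ℝ) :
    HasDerivAt (fun r : ℝ => r ^ (m + 3) + n) (((m : ℝ) + 3) * x ^ (m + 2)) x := by
  simpa using (hasDerivAt_pow (m + 3) x).add_const n

lemma hasDerivAt_f (hp : p * ((m : ℝ) + 3) = (m : ℝ) + 2) (hn : 0 < n) (hx : 0 ≤ x) :
    HasDerivAt (fun r => (r ^ (m + 3) + n) ^ (-p) * (r - r ^ (m + 2)))
      ((x ^ (m + 3) + n) ^ (-p - 1) *
        (n - n * ((m : ℝ) + 2) * x ^ (m + 1) - ((m : ℝ) + 1) * x ^ (m + 3))) x := by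
  have hu : HasDerivAt (fun r : ℝ => r - r ^ (m + 2)) (1 - ((m : ℝ) + 2) * x ^ (m + 1)) x :=
    ((hasDerivAt_id' x).sub (hasDerivAt_pow (m + 2) x)).congr_deriv (by push_cast; ring)
  convert (hasDerivAt_f_denom m n x).rpow_const_mul hu (by positivity) using 2
  linear_combination x ^ (m + 2) * (x - x ^ (m + 2)) * hp

lemma hasDerivAt_deriv_f (hp : p * ((m : ℝ) + 3) = (m : ℝ) + 2) (hn : 0 < n) (hx : 0 ≤ x) :
    HasDerivAt (fun r => (r ^ (m + 3) + n) ^ (-p - 1) *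
        (n - n * ((m : ℝ) + 2) * r ^ (m + 1) - ((m : ℝ) + 1) * r ^ (m + 3)))
      ((x ^ (m + 3) + n) ^ (-p - 2) *
        (((m : ℝ) + 2) * ((m : ℝ) + 1) * x ^ (2 * m + 5) +
          n * ((m : ℝ) + 2) * ((m : ℝ) + 4) * x ^ (2 * m + 3) -
          n * ((m : ℝ) + 2) * ((m : ℝ) + 4) * x ^ (m + 2) -
          n ^ 2 * ((m : ℝ) + 2) * ((m : ℝ) + 1) * x ^ m)) x := by
  have hA : HasDerivAt (fun r : ℝ => n - n * ((m : ℝ) + 2) * r ^ (m + 1) - ((m : ℝ) + 1) * r ^ (m + 3))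
      (-n * ((m : ℝ) + 2) * ((m : ℝ) + 1) * x ^ m - ((m : ℝ) + 1) * ((m : ℝ) + 3) * x ^ (m + 2)) x :=
    ((((hasDerivAt_pow (m + 1) x).const_mul (n * ((m : ℝ) + 2))).const_sub n).sub
      ((hasDerivAt_pow (m + 3) x).const_mul ((m : ℝ) + 1))).congr_deriv (by push_cast; ring)
  convert (hasDerivAt_f_denom m n x).rpow_const_mul hA (by positivity) using 2
  · ring_nf
  · linear_combination
      x ^ (m + 2) * (n - n * ((m : ℝ) + 2) * x ^ (m + 1) - ((m : ℝ) + 1) * x ^ (m + 3)) * hp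

lemma deriv2_f_numerator_neg (hn : 1 ≤ n) (hx0 : 0 < x) (hx1 : x < 1) :
    ((m : ℝ) + 2) * ((m : ℝ) + 1) * x ^ (2 * m + 5) +
      n * ((m : ℝ) + 2) * ((m : ℝ) + 4) * x ^ (2 * m + 3) -
      n * ((m : ℝ) + 2) * ((m : ℝ) + 4) * x ^ (m + 2) -
      n ^ 2 * ((m : ℝ) + 2) * ((m : ℝ) + 1) * x ^ m < 0 := by
  have hlt : x ^ (2 * m + 5) < n ^ 2 * x ^ m :=
    calc x ^ (2 * m + 5) < x ^ m := pow_lt_pow_right_of_lt_one₀ hx0 hx1 (by omega)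
      _ ≤ n ^ 2 * x ^ m := le_mul_of_one_le_left (by positivity) (one_le_pow₀ hn)
  have hle : x ^ (2 * m + 3) ≤ x ^ (m + 2) := pow_le_pow_of_le_one hx0.le hx1.le (by omega)
  have hc : (0 : ℝ) < ((m : ℝ) + 2) * ((m : ℝ) + 1) := by positivity
  have hc' : (0 : ℝ) ≤ n * ((m : ℝ) + 2) * ((m : ℝ) + 4) := by positivity
  nlinarith [mul_lt_mul_of_pos_left hlt hc, mul_le_mul_of_nonneg_left hle hc']

end

/-- The function `f_{d,n}(r) = (r - r^d)/(r^(d+1)+n)^(d/(d+1))` is strictly concave on `[0,1]`. -/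
theorem f_strictConcave (d n : ℕ) (hd : 2 ≤ d) (hn : 1 ≤ n) :
    StrictConcaveOn ℝ (Set.Icc (0 : ℝ) 1)
      (fun r : ℝ => (r - r ^ d) / (r ^ (d + 1) + (n : ℝ)) ^ ((d : ℝ) / ((d : ℝ) + 1))) := by
  obtain ⟨m, rfl⟩ : ∃ m, d = m + 2 := ⟨d - 2, by omega⟩
  set p : ℝ := ((m + 2 : ℕ) : ℝ) / ((m + 2 : ℕ) + 1) with hp_def
  have hp : p * ((m : ℝ) + 3) = (m : ℝ) + 2 := by
    push_cast [hp_def]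
    field_simp
    ring
  have hn1 : (1 : ℝ) ≤ n := by exact_mod_cast hn
  have hn0 : (0 : ℝ) < n := by linarith
  have hs : ∀ r ∈ Icc (0 : ℝ) 1, 0 < r ^ (m + 3) + n := fun r hr =>
    add_pos_of_nonneg_of_pos (pow_nonneg hr.1 _) hn0
  have hcont : ContinuousOn (fun r : ℝ => (r ^ (m + 3) + n) ^ (-p) * (r - r ^ (m + 2))) (Icc 0 1) :=
    ((continuousOn_pow _).add continuousOn_const |>.rpow_const fun r hr =>
      Or.inl (hs r hr).ne').mul (by fun_prop)
  have hint : ∀ x ∈ interior (Icc (0 : ℝ) 1), 0 < x ∧ x < 1 := by simp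
  refine (strictConcaveOn_of_hasDerivAt2_neg (convex_Icc 0 1) hcont
    (fun x hx => hasDerivAt_f hp hn0 (hint x hx).1.le)
    (fun x hx => hasDerivAt_deriv_f hp hn0 (hint x hx).1.le)
    fun x hx => ?_).congr fun r hr => ?_
  · obtain ⟨hx0, hx1⟩ := hint x hx
    exact mul_neg_of_pos_of_neg (by positivity) (deriv2_f_numerator_neg hn1 hx0 hx1)
  · dsimp only
    rw [rpow_neg (hs r hr).le, inv_mul_eq_div]
end

section
/- For integers d ≥ 2 and n ≥ 1, there exists a unique r* in (0, λ_d) such that f_{d,n}(r*) = g_d(r*); moreover f_{d,n} < g_d on (0, r*), g_d < f_{d,n} on (r*, λ_d], and r* > ρ(d,n), where ρ(d,n) is the unique positive root of (d-1)ρ^{d+1} + dnρ^{d-1} - n = 0. -/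
/-!
Write `a = (d² - 1) / 2` and `p = (d + 1) / 2`. For fixed `r`, the map `x ↦ r ^ a * (1 + x ^ p)`
is strictly increasing on `[0, ∞)`; it sends `g_d(r)` to the constant `λ_d ^ a` and `f_{d,n}(r)`
to `Φ(r) = r ^ a + √Q(r)`, where `Q(r) = (r^d - r^(2d-1))^(d+1) / (r^(d+1) + n)^d`. Hence
comparing `f` with `g` amounts to comparing `Φ` with `λ_d ^ a`.

On `[0, λ_d]` the derivative of `Q` has the sign of `n (d - (2d-1) r^(d-1)) - (d-1) r^(2d)`,
which is nonnegative because `d r^(d-1) ≤ 1` there; so `Φ` is strictly increasing, and since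
`Φ(0) = 0 < λ_d ^ a < Φ(λ_d)` it crosses `λ_d ^ a` exactly once, at `r*`.

At the root `ρ`, with `m = 1 - d ρ^(d-1)`, the equation for `ρ` gives
`d ^ p * Φ(ρ) = √((1-m)^(d+1)) + √((d-1+m) m^d)`, and `0 < m < λ_d² (1-m)` pushes the right
side below `1`, i.e. `Φ(ρ) < λ_d ^ a`, whence `ρ < r*`.
-/

open Real Set

namespace CrossingPoint

noncomputable def lam (d : ℕ) : ℝ := (d : ℝ) ^ (-(1 : ℝ) / ((d : ℝ) - 1))

noncomputable def f (d n : ℕ) (r : ℝ) : ℝ :=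
  (r - r ^ d) / (r ^ (d + 1) + (n : ℝ)) ^ ((d : ℝ) / ((d : ℝ) + 1))

noncomputable def g (d : ℕ) (r : ℝ) : ℝ :=
  ((lam d / r) ^ (((d : ℝ) ^ 2 - 1) / 2) - 1) ^ ((2 : ℝ) / ((d : ℝ) + 1))

noncomputable def Q (d n : ℕ) (r : ℝ) : ℝ :=
  (r ^ d - r ^ (2 * d - 1)) ^ (d + 1) / (r ^ (d + 1) + (n : ℝ)) ^ d

noncomputable def Φ (d n : ℕ) (r : ℝ) : ℝ :=
  r ^ (((d : ℝ) ^ 2 - 1) / 2) + √(Q d n r)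

variable {d n : ℕ}

lemma lam_pos (hd : 2 ≤ d) : 0 < lam d := by
  unfold lam; positivity

lemma lam_lt_one (hd : 2 ≤ d) : lam d < 1 := by
  have hd' : (2 : ℝ) ≤ d := by exact_mod_cast hd
  exact rpow_lt_one_of_one_lt_of_neg (by linarith)
    (div_neg_of_neg_of_pos (by norm_num) (by linarith))

lemma lam_pow_sub_one (hd : 2 ≤ d) : lam d ^ (d - 1) = (d : ℝ)⁻¹ := by
  have hd' : (2 : ℝ) ≤ d := by exact_mod_cast hd
  rw [lam, ← rpow_natCast, ← rpow_mul (by positivity), Nat.cast_sub (by omega),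
    Nat.cast_one, div_mul_cancel₀ _ (by linarith), rpow_neg_one]

lemma le_lam_iff (hd : 2 ≤ d) {r : ℝ} (hr : 0 ≤ r) :
    r ≤ lam d ↔ d * r ^ (d - 1) ≤ 1 := by
  have hd' : (0 : ℝ) < d := by positivity
  rw [← pow_le_pow_iff_left₀ hr (lam_pos hd).le (by omega : d - 1 ≠ 0), lam_pow_sub_one hd,
    inv_eq_one_div, le_div_iff₀' hd']

lemma lt_lam_iff (hd : 2 ≤ d) {r : ℝ} (hr : 0 ≤ r) :
    r < lam d ↔ d * r ^ (d - 1) < 1 := by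
  have hd' : (0 : ℝ) < d := by positivity
  rw [← pow_lt_pow_iff_left₀ hr (lam_pos hd).le (by omega : d - 1 ≠ 0), lam_pow_sub_one hd,
    inv_eq_one_div, lt_div_iff₀' hd']

lemma sq_sub_one_div_two_pos (hd : 2 ≤ d) : 0 < ((d : ℝ) ^ 2 - 1) / 2 := by
  have : (2 : ℝ) ≤ d := by exact_mod_cast hd
  nlinarith

lemma rpow_half_eq_sqrt_pow {y : ℝ} (hy : 0 ≤ y) (k : ℕ) :
    y ^ ((k : ℝ) / 2) = √(y ^ k) := by
  rw [sqrt_eq_rpow, ← rpow_natCast, ← rpow_mul hy, mul_one_div]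

lemma rpow_sq_sub_one_div_two (hd : 1 ≤ d) {r : ℝ} (hr : 0 ≤ r) :
    r ^ (((d : ℝ) ^ 2 - 1) / 2) = (r ^ (d - 1)) ^ (((d : ℝ) + 1) / 2) := by
  rw [← rpow_natCast r (d - 1), ← rpow_mul hr, Nat.cast_sub hd]
  ring_nf

lemma f_nonneg (hd : d ≠ 0) {r : ℝ} (hr0 : 0 ≤ r) (hr1 : r ≤ 1) : 0 ≤ f d n r :=
  div_nonneg (sub_nonneg.2 (pow_le_of_le_one hr0 hr1 hd)) (by positivity)

lemma g_nonneg (hd : 2 ≤ d) {r : ℝ} (hr0 : 0 < r) (hrl : r ≤ lam d) : 0 ≤ g d r := by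
  have h1 : 1 ≤ (lam d / r) ^ (((d : ℝ) ^ 2 - 1) / 2) :=
    one_le_rpow ((one_le_div hr0).2 hrl) (sq_sub_one_div_two_pos hd).le
  exact rpow_nonneg (sub_nonneg.2 h1) _

lemma rpow_mul_one_add_f_rpow (hd : 1 ≤ d) {r : ℝ} (hr0 : 0 ≤ r) (hr1 : r ≤ 1) :
    r ^ (((d : ℝ) ^ 2 - 1) / 2) * (1 + f d n r ^ (((d : ℝ) + 1) / 2)) = Φ d n r := by
  have hW : 0 ≤ r ^ (d + 1) + (n : ℝ) := by positivity
  have hp : ((d : ℝ) + 1) / 2 = ((d + 1 : ℕ) : ℝ) / 2 := by push_cast; ring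
  have hWpow : ((r ^ (d + 1) + (n : ℝ)) ^ ((d : ℝ) / ((d : ℝ) + 1))) ^ (d + 1) =
      (r ^ (d + 1) + (n : ℝ)) ^ d := by
    rw [← rpow_natCast _ (d + 1), ← rpow_mul hW, Nat.cast_add_one,
      div_mul_cancel₀ _ (by positivity), rpow_natCast]
  have hu : r ^ (d - 1) * (r - r ^ d) = r ^ d - r ^ (2 * d - 1) := by
    rw [mul_sub, ← pow_succ, ← pow_add, Nat.sub_add_cancel hd]
    congr 2; omega
  rw [Φ, mul_add, mul_one, rpow_sq_sub_one_div_two hd hr0,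
    ← mul_rpow (by positivity) (f_nonneg (by omega) hr0 hr1), hp,
    rpow_half_eq_sqrt_pow (mul_nonneg (by positivity) (f_nonneg (by omega) hr0 hr1)), f,
    mul_div_assoc', div_pow, hWpow, hu, Q]

lemma rpow_mul_one_add_g_rpow (hd : 2 ≤ d) {r : ℝ} (hr0 : 0 < r) (hrl : r ≤ lam d) :
    r ^ (((d : ℝ) ^ 2 - 1) / 2) * (1 + g d r ^ (((d : ℝ) + 1) / 2)) =
      lam d ^ (((d : ℝ) ^ 2 - 1) / 2) := by
  have hd' : (2 : ℝ) ≤ d := by exact_mod_cast hd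
  have h1 : 1 ≤ (lam d / r) ^ (((d : ℝ) ^ 2 - 1) / 2) :=
    one_le_rpow ((one_le_div hr0).2 hrl) (sq_sub_one_div_two_pos hd).le
  rw [g, ← rpow_mul (by linarith), div_mul_div_cancel₀ (by linarith), div_self two_ne_zero,
    rpow_one, add_sub_cancel, ← mul_rpow hr0.le (div_nonneg (lam_pos hd).le hr0.le),
    mul_div_cancel₀ _ hr0.ne']

lemma strictMonoOn_mul_one_add_rpow {c p : ℝ} (hc : 0 < c) (hp : 0 < p) :
    StrictMonoOn (fun x : ℝ => c * (1 + x ^ p)) (Ici 0) := fun _ hx _ _ hxy =>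
  mul_lt_mul_of_pos_left (add_lt_add_right (rpow_lt_rpow hx hxy hp) 1) hc

lemma f_lt_g_iff (hd : 2 ≤ d) {r : ℝ} (hr0 : 0 < r) (hrl : r ≤ lam d) :
    f d n r < g d r ↔ Φ d n r < lam d ^ (((d : ℝ) ^ 2 - 1) / 2) := by
  have hr1 : r ≤ 1 := hrl.trans (lam_lt_one hd).le
  rw [← rpow_mul_one_add_f_rpow (by omega) hr0.le hr1, ← rpow_mul_one_add_g_rpow hd hr0 hrl]
  exact ((strictMonoOn_mul_one_add_rpow (rpow_pos_of_pos hr0 _) (by positivity)).lt_iff_lt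
    (f_nonneg (by omega) hr0.le hr1) (g_nonneg hd hr0 hrl)).symm

lemma g_lt_f_iff (hd : 2 ≤ d) {r : ℝ} (hr0 : 0 < r) (hrl : r ≤ lam d) :
    g d r < f d n r ↔ lam d ^ (((d : ℝ) ^ 2 - 1) / 2) < Φ d n r := by
  have hr1 : r ≤ 1 := hrl.trans (lam_lt_one hd).le
  rw [← rpow_mul_one_add_f_rpow (by omega) hr0.le hr1, ← rpow_mul_one_add_g_rpow hd hr0 hrl]
  exact ((strictMonoOn_mul_one_add_rpow (rpow_pos_of_pos hr0 _) (by positivity)).lt_iff_lt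
    (g_nonneg hd hr0 hrl) (f_nonneg (by omega) hr0.le hr1)).symm

lemma f_eq_g_iff (hd : 2 ≤ d) {r : ℝ} (hr0 : 0 < r) (hrl : r ≤ lam d) :
    f d n r = g d r ↔ Φ d n r = lam d ^ (((d : ℝ) ^ 2 - 1) / 2) := by
  have hr1 : r ≤ 1 := hrl.trans (lam_lt_one hd).le
  rw [← rpow_mul_one_add_f_rpow (by omega) hr0.le hr1, ← rpow_mul_one_add_g_rpow hd hr0 hrl]
  exact ((strictMonoOn_mul_one_add_rpow (rpow_pos_of_pos hr0 _) (by positivity)).eq_iff_eq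
    (f_nonneg (by omega) hr0.le hr1) (g_nonneg hd hr0 hrl)).symm

lemma deriv_Q_factor_nonneg {c S r x : ℝ} (hc : 2 ≤ c) (hS : 0 < S) (hcS : c * S ≤ 1)
    (hr0 : 0 ≤ r) (hr1 : r ≤ 1) (hx : 1 ≤ x) :
    0 ≤ x * (c - (2 * c - 1) * S) - (c - 1) * S ^ 2 * r ^ 2 := by
  have hS2 : (c - 1) * S ^ 2 ≤ S := by nlinarith
  have hr2 : (c - 1) * S ^ 2 * r ^ 2 ≤ (c - 1) * S ^ 2 :=
    mul_le_of_le_one_right (by nlinarith) (by nlinarith)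
  have hpos : 0 ≤ c - (2 * c - 1) * S := by nlinarith
  nlinarith [mul_le_mul_of_nonneg_right hx hpos]

lemma hasDerivAt_Q (hd : 1 ≤ d) (hn : 1 ≤ n) {r : ℝ} (hr : 0 ≤ r) :
    HasDerivAt (Q d n)
      ((d + 1) * (r ^ d - r ^ (2 * d - 1)) ^ d * (r ^ (d + 1) + n) ^ (d - 1) * r ^ (d - 1) *
        (n * (d - (2 * d - 1) * r ^ (d - 1)) - (d - 1) * (r ^ (d - 1)) ^ 2 * r ^ 2) /
        ((r ^ (d + 1) + n) ^ d) ^ 2) r := by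
  obtain ⟨e, rfl⟩ : ∃ e, d = e + 1 := ⟨d - 1, by omega⟩
  have hQ : Q (e + 1) n = fun x : ℝ =>
      (x ^ (e + 1) - x ^ (2 * e + 1)) ^ (e + 2) / (x ^ (e + 2) + n) ^ (e + 1) := by
    funext x; rw [Q, show 2 * (e + 1) - 1 = 2 * e + 1 by omega]
  have hu : HasDerivAt (fun x : ℝ => x ^ (e + 1) - x ^ (2 * e + 1))
      ((e + 1) * r ^ e - (2 * e + 1) * r ^ (2 * e)) r :=
    ((hasDerivAt_pow (e + 1) r).fun_sub (hasDerivAt_pow (2 * e + 1) r)).congr_deriv (by simp)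
  have hW : HasDerivAt (fun x : ℝ => x ^ (e + 2) + n) ((e + 2) * r ^ (e + 1)) r :=
    ((hasDerivAt_pow (e + 2) r).add_const (n : ℝ)).congr_deriv (by push_cast; ring)
  have hW0 : 0 < r ^ (e + 2) + n := by
    have hn' : (1 : ℝ) ≤ n := by exact_mod_cast hn
    positivity
  rw [hQ, show 2 * (e + 1) - 1 = 2 * e + 1 by omega, Nat.add_sub_cancel]
  refine ((hu.fun_pow (e + 2)).fun_div (hW.fun_pow (e + 1)) (by positivity)).congr_deriv ?_
  push_cast
  ring

lemma monotoneOn_Q (hd : 2 ≤ d) (hn : 1 ≤ n) : MonotoneOn (Q d n) (Icc 0 (lam d)) := by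
  refine monotoneOn_of_hasDerivWithinAt_nonneg (convex_Icc _ _)
    (fun r hr => (hasDerivAt_Q (by omega) hn hr.1).continuousAt.continuousWithinAt)
    (fun r hr => (hasDerivAt_Q (by omega) hn (interior_subset hr).1).hasDerivWithinAt) ?_
  intro r hr
  rw [interior_Icc] at hr
  obtain ⟨hr0, hrl⟩ := hr
  have hr1 : r ≤ 1 := hrl.le.trans (lam_lt_one hd).le
  have hu : 0 ≤ r ^ d - r ^ (2 * d - 1) :=
    sub_nonneg.2 (pow_le_pow_of_le_one hr0.le hr1 (by omega))
  have hfactor := deriv_Q_factor_nonneg (x := n) (by exact_mod_cast hd) (pow_pos hr0 (d - 1))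
    ((le_lam_iff hd hr0.le).1 hrl.le) hr0.le hr1 (by exact_mod_cast hn)
  exact div_nonneg (mul_nonneg (mul_nonneg (mul_nonneg (mul_nonneg (by positivity)
    (pow_nonneg hu _)) (by positivity)) (by positivity)) hfactor) (sq_nonneg _)

lemma strictMonoOn_Φ (hd : 2 ≤ d) (hn : 1 ≤ n) : StrictMonoOn (Φ d n) (Icc 0 (lam d)) :=
  fun _ hx _ hy hxy => add_lt_add_of_lt_of_le
    (rpow_lt_rpow hx.1 hxy (sq_sub_one_div_two_pos hd))
    (sqrt_le_sqrt (monotoneOn_Q hd hn hx hy hxy.le))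

lemma continuousOn_Φ (hd : 2 ≤ d) (hn : 1 ≤ n) : ContinuousOn (Φ d n) (Icc 0 (lam d)) :=
  fun r hr => ((continuousAt_rpow_const r _ (Or.inr (sq_sub_one_div_two_pos hd).le)).add
    (hasDerivAt_Q (by omega) hn hr.1).continuousAt.sqrt).continuousWithinAt

lemma Φ_zero (hd : 2 ≤ d) : Φ d n 0 = 0 := by
  simp [Φ, Q, zero_rpow (sq_sub_one_div_two_pos hd).ne', zero_pow (by omega : d ≠ 0),
    zero_pow (by omega : 2 * d - 1 ≠ 0)]

lemma rpow_lt_Φ_lam (hd : 2 ≤ d) : lam d ^ (((d : ℝ) ^ 2 - 1) / 2) < Φ d n (lam d) := by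
  have hu : 0 < lam d ^ d - lam d ^ (2 * d - 1) :=
    sub_pos.2 (pow_lt_pow_right_of_lt_one₀ (lam_pos hd) (lam_lt_one hd) (by omega))
  have hQ : 0 < Q d n (lam d) :=
    div_pos (pow_pos hu _) (pow_pos (by have := lam_pos hd; positivity) _)
  exact lt_add_of_pos_right _ (sqrt_pos.2 hQ)

lemma exists_Φ_eq (hd : 2 ≤ d) (hn : 1 ≤ n) :
    ∃ r ∈ Ioo 0 (lam d), Φ d n r = lam d ^ (((d : ℝ) ^ 2 - 1) / 2) :=
  intermediate_value_Ioo (lam_pos hd).le (continuousOn_Φ hd hn)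
    ⟨by rw [Φ_zero hd]; exact rpow_pos_of_pos (lam_pos hd) _, rpow_lt_Φ_lam hd⟩

lemma sub_one_add_mul_pow_sub_two_le (hd : 2 ≤ d) {m : ℝ} (hm0 : 0 ≤ m)
    (hm : m ≤ lam d ^ 2) :
    ((d : ℝ) - 1 + m) * m ^ (d - 2) ≤ 1 + m := by
  obtain rfl | hd3 := eq_or_lt_of_le hd
  · norm_num
  obtain ⟨e, rfl⟩ : ∃ e, d = e + 3 := ⟨d - 3, by omega⟩
  have hl0 := lam_pos hd
  have hl1 := lam_lt_one hd
  have hlam : ((e : ℝ) + 3) * lam (e + 3) ^ (e + 2) = 1 := by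
    have h := lam_pow_sub_one hd
    rw [show e + 3 - 1 = e + 2 by omega] at h
    rw [h]; push_cast; field_simp
  have hm1 : m ≤ 1 := hm.trans (pow_le_one₀ hl0.le hl1.le)
  have hpow : m ^ (e + 1) ≤ lam (e + 3) ^ (2 * e + 2) := by
    rw [show 2 * e + 2 = 2 * (e + 1) by ring, pow_mul]
    exact pow_le_pow_left₀ hm0 hm _
  calc ((e + 3 : ℕ) - 1 + m) * m ^ (e + 3 - 2)
      ≤ ((e : ℝ) + 3) * lam (e + 3) ^ (2 * e + 2) := by
        rw [show e + 3 - 2 = e + 1 by omega]; push_cast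
        exact mul_le_mul (by linarith) hpow (by positivity) (by positivity)
    _ = lam (e + 3) ^ e := by rw [← mul_one (lam (e + 3) ^ e), ← hlam]; ring
    _ ≤ 1 + m := by linarith [pow_le_one₀ (n := e) hl0.le hl1.le]

lemma sqrt_add_sqrt_lt_one (hd : 2 ≤ d) {m : ℝ} (hm0 : 0 < m) (hm : m < 1 / 2)
    (hdm : ((d : ℝ) - 1 + m) * m ^ (d - 2) ≤ 1 + m) :
    √((1 - m) ^ (d + 1)) + √(((d : ℝ) - 1 + m) * m ^ d) < 1 := by
  have h1 : √((1 - m) ^ (d + 1)) ≤ (1 - m) * (1 - m / 2) := by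
    refine sqrt_le_iff.2 ⟨by nlinarith, ?_⟩
    calc (1 - m) ^ (d + 1) ≤ (1 - m) ^ 3 :=
          pow_le_pow_of_le_one (by linarith) (by linarith) (by omega)
      _ ≤ ((1 - m) * (1 - m / 2)) ^ 2 := by nlinarith [sq_nonneg m]
  have h2 : √(((d : ℝ) - 1 + m) * m ^ d) ≤ m * (1 + m / 2) := by
    refine sqrt_le_iff.2 ⟨by positivity, ?_⟩
    calc ((d : ℝ) - 1 + m) * m ^ d = ((d : ℝ) - 1 + m) * m ^ (d - 2) * m ^ 2 := by
          rw [mul_assoc, ← pow_add, Nat.sub_add_cancel hd]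
      _ ≤ (1 + m) * m ^ 2 := mul_le_mul_of_nonneg_right hdm (by positivity)
      _ ≤ (m * (1 + m / 2)) ^ 2 := by nlinarith [sq_nonneg m]
  nlinarith

section Root

variable {ρ : ℝ}

lemma lt_lam_of_root (hd : 2 ≤ d) (hρ : 0 < ρ)
    (heq : ((d : ℝ) - 1) * ρ ^ (d + 1) + d * n * ρ ^ (d - 1) - n = 0) : ρ < lam d := by
  have hd' : (2 : ℝ) ≤ d := by exact_mod_cast hd
  have hm : 0 < (n : ℝ) * (1 - d * ρ ^ (d - 1)) := by
    nlinarith [pow_pos hρ (d + 1)]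
  exact (lt_lam_iff hd hρ.le).2 (by linarith [pos_of_mul_pos_right hm n.cast_nonneg])

lemma Q_eq_of_root (hd : 2 ≤ d) (hρ : 0 < ρ)
    (heq : ((d : ℝ) - 1) * ρ ^ (d + 1) + d * n * ρ ^ (d - 1) - n = 0)
    {m : ℝ} (hm : m = 1 - d * ρ ^ (d - 1)) :
    Q d n ρ = ((d : ℝ)⁻¹) ^ (d + 1) * ((d - 1 + m) * m ^ d) := by
  have hd' : (2 : ℝ) ≤ d := by exact_mod_cast hd
  have hm0 : 0 < m := by
    have := (lt_lam_iff hd hρ.le).1 (lt_lam_of_root hd hρ heq); linarith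
  have hu : ρ ^ d - ρ ^ (2 * d - 1) = ρ ^ d * ((d : ℝ)⁻¹ * (d - 1 + m)) := by
    rw [show 2 * d - 1 = d + (d - 1) by omega, pow_add, hm]
    field_simp
    ring
  have hW : ρ ^ (d + 1) + n = ρ ^ (d + 1) * ((d - 1 + m) / m) := by
    rw [eq_comm, mul_div_assoc', div_eq_iff hm0.ne']
    linear_combination heq - n * hm
  rw [Q, hu, hW]
  simp only [mul_pow, div_pow, ← pow_mul]
  rw [mul_comm d (d + 1)]
  have : (d : ℝ) - 1 + m ≠ 0 := by linarith
  field_simp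
  ring

lemma Φ_lt_of_root (hd : 2 ≤ d) (hn : 1 ≤ n) (hρ : 0 < ρ)
    (heq : ((d : ℝ) - 1) * ρ ^ (d + 1) + d * n * ρ ^ (d - 1) - n = 0) :
    Φ d n ρ < lam d ^ (((d : ℝ) ^ 2 - 1) / 2) := by
  have hd' : (2 : ℝ) ≤ d := by exact_mod_cast hd
  have hn' : (1 : ℝ) ≤ n := by exact_mod_cast hn
  obtain ⟨m, hm⟩ : ∃ m : ℝ, m = 1 - d * ρ ^ (d - 1) := ⟨_, rfl⟩
  have hρl := lt_lam_of_root hd hρ heq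
  have hm0 : 0 < m := by
    have := (lt_lam_iff hd hρ.le).1 hρl; linarith
  have hS : ρ ^ (d - 1) = (d : ℝ)⁻¹ * (1 - m) := by
    rw [hm]; field_simp; ring
  have hm_lt : m < lam d ^ 2 * (1 - m) := by
    have hnm : n * m = ((d : ℝ) - 1) * (ρ ^ (d - 1) * ρ ^ 2) := by
      rw [← pow_add, show d - 1 + 2 = d + 1 by omega]
      linear_combination hm * n - heq
    have hρ2 : ρ ^ 2 < lam d ^ 2 := pow_lt_pow_left₀ hρl hρ.le two_ne_zero
    have hS0 : 0 < ρ ^ (d - 1) := pow_pos hρ _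
    calc m ≤ n * m := le_mul_of_one_le_left hm0.le hn'
      _ = ((d : ℝ) - 1) * (ρ ^ (d - 1) * ρ ^ 2) := hnm
      _ < d * (ρ ^ (d - 1) * lam d ^ 2) := by gcongr <;> linarith
      _ = lam d ^ 2 * (1 - m) := by rw [hS]; field_simp
  have hl2 : lam d ^ 2 < 1 := pow_lt_one₀ (lam_pos hd).le (lam_lt_one hd) two_ne_zero
  have hm_half : m < 1 / 2 := by nlinarith
  have hp : ((d : ℝ) + 1) / 2 = ((d + 1 : ℕ) : ℝ) / 2 := by push_cast; ring
  rw [Φ, rpow_sq_sub_one_div_two (by omega) hρ.le,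
    rpow_sq_sub_one_div_two (by omega) (lam_pos hd).le, lam_pow_sub_one hd, hS,
    Q_eq_of_root hd hρ heq hm, hp,
    rpow_half_eq_sqrt_pow (mul_nonneg (by positivity) (by linarith)),
    rpow_half_eq_sqrt_pow (by positivity), mul_pow, sqrt_mul (by positivity),
    sqrt_mul (by positivity), ← mul_add]
  exact mul_lt_of_lt_one_right (sqrt_pos.2 (by positivity)) (sqrt_add_sqrt_lt_one hd hm0
    hm_half (sub_one_add_mul_pow_sub_two_le hd hm0.le (by nlinarith)))

end Root

end CrossingPoint

open CrossingPoint

/-- There is a unique `r*` in `(0, λ_d)` where `f_{d,n}` and `g_d` intersect; below `r*`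
one has `f < g`, above it (up to `λ_d`) one has `g < f`, and `ρ(d,n) < r*`. -/
theorem crossing_point (d n : ℕ) (hd : 2 ≤ d) (hn : 1 ≤ n) (ρ : ℝ) (hρ : 0 < ρ)
    (heq : ((d : ℝ) - 1) * ρ ^ (d + 1) + (d : ℝ) * (n : ℝ) * ρ ^ (d - 1) - (n : ℝ) = 0) :
    ∃ rs : ℝ,
      rs ∈ Set.Ioo (0 : ℝ) ((d : ℝ) ^ (-(1 : ℝ) / ((d : ℝ) - 1))) ∧
      (rs - rs ^ d) / (rs ^ (d + 1) + (n : ℝ)) ^ ((d : ℝ) / ((d : ℝ) + 1)) =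
        (((d : ℝ) ^ (-(1 : ℝ) / ((d : ℝ) - 1)) / rs) ^ (((d : ℝ) ^ 2 - 1) / 2) - 1) ^
          ((2 : ℝ) / ((d : ℝ) + 1)) ∧
      (∀ r ∈ Set.Ioo (0 : ℝ) ((d : ℝ) ^ (-(1 : ℝ) / ((d : ℝ) - 1))),
        (r - r ^ d) / (r ^ (d + 1) + (n : ℝ)) ^ ((d : ℝ) / ((d : ℝ) + 1)) =
          (((d : ℝ) ^ (-(1 : ℝ) / ((d : ℝ) - 1)) / r) ^ (((d : ℝ) ^ 2 - 1) / 2) - 1) ^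
            ((2 : ℝ) / ((d : ℝ) + 1)) → r = rs) ∧
      (∀ r ∈ Set.Ioo (0 : ℝ) rs,
        (r - r ^ d) / (r ^ (d + 1) + (n : ℝ)) ^ ((d : ℝ) / ((d : ℝ) + 1)) <
          (((d : ℝ) ^ (-(1 : ℝ) / ((d : ℝ) - 1)) / r) ^ (((d : ℝ) ^ 2 - 1) / 2) - 1) ^
            ((2 : ℝ) / ((d : ℝ) + 1))) ∧
      (∀ r : ℝ, rs < r → r ≤ (d : ℝ) ^ (-(1 : ℝ) / ((d : ℝ) - 1)) →
        (((d : ℝ) ^ (-(1 : ℝ) / ((d : ℝ) - 1)) / r) ^ (((d : ℝ) ^ 2 - 1) / 2) - 1) ^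
            ((2 : ℝ) / ((d : ℝ) + 1)) <
          (r - r ^ d) / (r ^ (d + 1) + (n : ℝ)) ^ ((d : ℝ) / ((d : ℝ) + 1))) ∧
      ρ < rs := by
  obtain ⟨rs, hrs, hΦ⟩ := exists_Φ_eq hd hn
  have hmono := strictMonoOn_Φ hd hn
  have hrsI : rs ∈ Icc 0 (lam d) := ⟨hrs.1.le, hrs.2.le⟩
  refine ⟨rs, hrs, (f_eq_g_iff hd hrs.1 hrs.2.le).2 hΦ, ?_, ?_, ?_, ?_⟩
  · intro r hr hfg
    exact hmono.injOn ⟨hr.1.le, hr.2.le⟩ hrsI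
      (((f_eq_g_iff hd hr.1 hr.2.le).1 hfg).trans hΦ.symm)
  · intro r hr
    have hrI : r ∈ Icc 0 (lam d) := ⟨hr.1.le, hr.2.le.trans hrs.2.le⟩
    exact (f_lt_g_iff hd hr.1 hrI.2).2 (hΦ ▸ hmono hrI hrsI hr.2)
  · intro r hr hrl
    have hrI : r ∈ Icc 0 (lam d) := ⟨(hrs.1.trans hr).le, hrl⟩
    exact (g_lt_f_iff hd (hrs.1.trans hr) hrl).2 (hΦ ▸ hmono hrsI hrI hr)
  · have hρI : ρ ∈ Icc 0 (lam d) := ⟨hρ.le, (lt_lam_of_root hd hρ heq).le⟩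
    exact (hmono.lt_iff_lt hρI hrsI).1 (hΦ ▸ Φ_lt_of_root hd hn hρ heq)
end

section
/- Let d ≥ 2 and n ≥ 1 be integers, λ = d^{-1/(d-1)}, and ρ the unique positive root of (d-1)ρ^{d+1} + dnρ^{d-1} - n = 0. Then ρ ≤ σ, where σ := (1 + λ²/(d(n+λ²)))^{-1}·λ. -/
/-- `ρ(d,n) ≤ σ := (1 + λ²/(d(n+λ²)))⁻¹ λ`, where `λ = d^(-1/(d-1))` and `ρ` is the
unique positive root of `(d-1)ρ^(d+1) + d n ρ^(d-1) - n = 0`. -/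
theorem rho_le_sigma (d n : ℕ) (hd : 2 ≤ d) (hn : 1 ≤ n) (ρ : ℝ) (hρ : 0 < ρ)
    (heq : ((d : ℝ) - 1) * ρ ^ (d + 1) + (d : ℝ) * (n : ℝ) * ρ ^ (d - 1) - (n : ℝ) = 0) :
    ρ ≤ (1 + ((d : ℝ) ^ (-(1 : ℝ) / ((d : ℝ) - 1))) ^ 2 /
          ((d : ℝ) * ((n : ℝ) + ((d : ℝ) ^ (-(1 : ℝ) / ((d : ℝ) - 1))) ^ 2)))⁻¹ *
        (d : ℝ) ^ (-(1 : ℝ) / ((d : ℝ) - 1)) := by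
  set D : ℝ := (d : ℝ) with hDdef
  have hD2 : (2:ℝ) ≤ D := by rw [hDdef]; exact_mod_cast hd
  have hD0 : (0:ℝ) < D := by linarith
  have hD1 : (0:ℝ) < D - 1 := by linarith
  have hn1 : (1:ℝ) ≤ (n:ℝ) := by exact_mod_cast hn
  set L : ℝ := D ^ (-(1 : ℝ) / (D - 1)) with hLdef
  have hL0 : 0 < L := Real.rpow_pos_of_pos hD0 _
  -- L^(d-1) = 1/D
  have hcast : ((d - 1 : ℕ) : ℝ) = D - 1 := by
    rw [Nat.cast_sub (by omega : 1 ≤ d)]; simp [hDdef]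
  have hLd1 : L ^ (d - 1) = 1 / D := by
    rw [hLdef, ← Real.rpow_natCast (D ^ (-(1:ℝ)/(D-1))) (d-1), ← Real.rpow_mul hD0.le,
      hcast]
    rw [show -(1:ℝ)/(D-1)*(D-1) = -1 by field_simp]
    rw [Real.rpow_neg_one]
    exact (one_div D).symm
  have hLd2 : L ^ (d + 1) = L ^ 2 / D := by
    have : d + 1 = (d - 1) + 2 := by omega
    rw [this, pow_add, hLd1]; ring
  -- θ
  set θ : ℝ := L ^ 2 / (D * n + (D + 1) * L ^ 2) with hθdef
  have hden : 0 < D * n + (D + 1) * L ^ 2 := by positivity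
  have hθeq : θ * (D * n + (D + 1) * L ^ 2) = L ^ 2 := by
    rw [hθdef]; field_simp
  have hθ0 : 0 < θ := by rw [hθdef]; positivity
  have hθ1 : θ < 1 := by
    rw [hθdef, div_lt_one hden]; nlinarith [sq_nonneg L]
  -- σ = L * (1 - θ)
  have hA : 0 < D * ((n:ℝ) + L ^ 2) := by positivity
  have hσeq : (1 + L ^ 2 / (D * ((n:ℝ) + L ^ 2)))⁻¹ * L = L * (1 - θ) := by
    rw [hθdef]
    rw [show (1 + L ^ 2 / (D * ((n:ℝ) + L ^ 2))) = (D * n + (D+1) * L^2) / (D * ((n:ℝ) + L ^ 2)) by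
      field_simp; ring]
    field_simp
    ring
  rw [hσeq]
  set σ : ℝ := L * (1 - θ) with hσdef
  have hσ0 : 0 < σ := by
    apply mul_pos hL0; linarith
  -- Bernoulli bounds
  have b1 : 1 - (D + 1) * θ ≤ (1 - θ) ^ (d + 1) := by
    have h := one_add_mul_le_pow (a := -θ) (by linarith) (d + 1)
    have hc : ((d + 1 : ℕ) : ℝ) = D + 1 := by push_cast [hDdef]; ring
    rw [hc] at h
    calc 1 - (D+1) * θ = 1 + (D+1) * (-θ) := by ring
      _ ≤ (1 + -θ) ^ (d+1) := h
      _ = (1 - θ) ^ (d+1) := by ring_nf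
  have b2 : 1 - (D - 1) * θ ≤ (1 - θ) ^ (d - 1) := by
    have h := one_add_mul_le_pow (a := -θ) (by linarith) (d - 1)
    rw [hcast] at h
    calc 1 - (D-1) * θ = 1 + (D-1) * (-θ) := by ring
      _ ≤ (1 + -θ) ^ (d-1) := h
      _ = (1 - θ) ^ (d-1) := by ring_nf
  -- key: f(σ) ≥ 0
  have hσd1 : σ ^ (d - 1) = (1/D) * (1 - θ) ^ (d - 1) := by
    rw [hσdef, mul_pow, hLd1]
  have hσd2 : σ ^ (d + 1) = (L^2/D) * (1 - θ) ^ (d + 1) := by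
    rw [hσdef, mul_pow, hLd2]
  have key : (n:ℝ) ≤ (D - 1) * σ ^ (d + 1) + D * n * σ ^ (d - 1) := by
    have h1 : (D - 1) * ((L^2/D) * (1 - (D+1)*θ)) ≤ (D - 1) * σ ^ (d + 1) := by
      rw [hσd2]
      apply mul_le_mul_of_nonneg_left _ (by linarith)
      apply mul_le_mul_of_nonneg_left b1 (by positivity)
    have h2 : D * n * ((1/D) * (1 - (D-1)*θ)) ≤ D * n * σ ^ (d - 1) := by
      rw [hσd1]
      apply mul_le_mul_of_nonneg_left _ (by positivity)
      apply mul_le_mul_of_nonneg_left b2 (by positivity)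
    have hexact : (D - 1) * ((L^2/D) * (1 - (D+1)*θ)) + D * n * ((1/D) * (1 - (D-1)*θ))
        = (n:ℝ) := by
      have hinv : D * D⁻¹ = 1 := mul_inv_cancel₀ hD0.ne'
      linear_combination (-((D-1)/D)) * hθeq + (n:ℝ) * hinv
    linarith
  -- monotonicity
  by_contra hcon
  push_neg at hcon
  have hσρ1 : σ ^ (d + 1) ≤ ρ ^ (d + 1) := pow_le_pow_left₀ hσ0.le hcon.le _
  have hσρ2 : σ ^ (d - 1) < ρ ^ (d - 1) := pow_lt_pow_left₀ hcon hσ0.le (by omega)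
  have hDn : 0 < D * n := by positivity
  have m1 : D * ↑n * σ ^ (d - 1) < D * ↑n * ρ ^ (d - 1) :=
    mul_lt_mul_of_pos_left hσρ2 hDn
  have m2 : (D - 1) * σ ^ (d + 1) ≤ (D - 1) * ρ ^ (d + 1) :=
    mul_le_mul_of_nonneg_left hσρ1 (by linarith : (0:ℝ) ≤ D - 1)
  linarith
end

section
/- For every real x ≥ 3, every integer d ≥ 3 and every integer n ≥ 1, the cubic polynomial p_{d,n}(x) = (n+2λ²)x³ + λ²x² - 2(n+2λ²)x - 2(λ² + 2(n+λ²)³/(λ²·n^d)) is positive, where λ = d^{-1/(d-1)}. -/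
lemma nat_pow_bound : ∀ d : ℕ, 3 ≤ d → d ^ 2 ≤ 3 ^ (d - 1) := by
  intro d hd
  induction d with
  | zero => omega
  | succ k ih =>
    rcases Nat.lt_or_ge k 3 with h | h
    · interval_cases k <;> omega
    · have ihk := ih (by omega)
      have h2 : (k + 1) - 1 = (k - 1) + 1 := by omega
      rw [h2]
      calc (k + 1) ^ 2 ≤ 3 * k ^ 2 := by nlinarith
        _ ≤ 3 * 3 ^ (k - 1) := by omega
        _ = 3 ^ (k - 1 + 1) := by rw [pow_succ]; ring

lemma lam_sq_bounds (d : ℕ) (hd : 3 ≤ d) :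
    1 / 3 ≤ ((d : ℝ) ^ (-(1 : ℝ) / ((d : ℝ) - 1))) ^ 2 ∧
    ((d : ℝ) ^ (-(1 : ℝ) / ((d : ℝ) - 1))) ^ 2 < 1 := by
  have hd3 : (3 : ℝ) ≤ (d : ℝ) := by exact_mod_cast hd
  have hd0 : (0 : ℝ) < d := by linarith
  have hdm : (0 : ℝ) < (d : ℝ) - 1 := by linarith
  have hdm' : ((d : ℝ) - 1) ≠ 0 := ne_of_gt hdm
  set t : ℝ := (d : ℝ) ^ (-(1 : ℝ) / ((d : ℝ) - 1)) with ht
  have ht0 : 0 < t := Real.rpow_pos_of_pos hd0 _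
  have ht1 : t < 1 := by
    apply Real.rpow_lt_one_of_one_lt_of_neg (by linarith)
    exact div_neg_of_neg_of_pos (by norm_num) hdm
  constructor
  · set a : ℝ := (d : ℝ) ^ ((2 : ℝ) / ((d : ℝ) - 1)) with ha
    have ha0 : 0 < a := Real.rpow_pos_of_pos hd0 _
    have hinv : t ^ 2 = a⁻¹ := by
      rw [ht, ← Real.rpow_natCast ((d : ℝ) ^ (-(1 : ℝ) / ((d : ℝ) - 1))) 2,
        ← Real.rpow_mul hd0.le, ha, ← Real.rpow_neg hd0.le]
      congr 1
      push_cast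
      ring
    have hc : ((d - 1 : ℕ) : ℝ) = (d : ℝ) - 1 := by
      rw [Nat.cast_sub (by omega)]; norm_num
    have hpow : a ^ (d - 1) = (d : ℝ) ^ 2 := by
      rw [ha, ← Real.rpow_natCast ((d : ℝ) ^ ((2 : ℝ) / ((d : ℝ) - 1))) (d - 1),
        ← Real.rpow_mul hd0.le, hc, div_mul_cancel₀ _ hdm',
        show (2 : ℝ) = ((2 : ℕ) : ℝ) by norm_num, Real.rpow_natCast]
    have hnat : ((d : ℝ)) ^ 2 ≤ (3 : ℝ) ^ (d - 1) := by
      exact_mod_cast nat_pow_bound d hd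
    have ha3 : a ≤ 3 := by
      apply le_of_pow_le_pow_left₀ (by omega : d - 1 ≠ 0) (by norm_num)
      rw [hpow]; exact hnat
    have := one_div_le_one_div_of_le ha0 ha3
    rw [hinv, ← one_div]
    exact this
  · exact pow_lt_one₀ (le_of_lt ht0) ht1 two_ne_zero

/-- Positivity of the cubic `p_{d,n}` at every `x ≥ 3`, for integers `d ≥ 3`, `n ≥ 1`,
where `λ = d^(-1/(d-1))`. -/
theorem cubic_pos (d n : ℕ) (hd : 3 ≤ d) (hn : 1 ≤ n) (x : ℝ) (hx : 3 ≤ x) :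
    0 < ((n : ℝ) + 2 * ((d : ℝ) ^ (-(1 : ℝ) / ((d : ℝ) - 1))) ^ 2) * x ^ 3 +
        ((d : ℝ) ^ (-(1 : ℝ) / ((d : ℝ) - 1))) ^ 2 * x ^ 2 -
        2 * ((n : ℝ) + 2 * ((d : ℝ) ^ (-(1 : ℝ) / ((d : ℝ) - 1))) ^ 2) * x -
        2 * (((d : ℝ) ^ (-(1 : ℝ) / ((d : ℝ) - 1))) ^ 2 +
          2 * ((n : ℝ) + ((d : ℝ) ^ (-(1 : ℝ) / ((d : ℝ) - 1))) ^ 2) ^ 3 /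
            (((d : ℝ) ^ (-(1 : ℝ) / ((d : ℝ) - 1))) ^ 2 * (n : ℝ) ^ d)) := by
  obtain ⟨hL1, hL2⟩ := lam_sq_bounds d hd
  set L : ℝ := ((d : ℝ) ^ (-(1 : ℝ) / ((d : ℝ) - 1))) ^ 2 with hL
  have hL0 : 0 < L := by linarith
  have hN1 : (1 : ℝ) ≤ (n : ℝ) := by exact_mod_cast hn
  have hN0 : (0 : ℝ) < (n : ℝ) := by linarith
  have hNd : (n : ℝ) ^ 3 ≤ (n : ℝ) ^ d := pow_le_pow_right₀ hN1 hd
  have hD : 0 < L * (n : ℝ) ^ d := by positivity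
  have hcube : (1 + L) ^ 3 ≤ 8 * L := by
    nlinarith [mul_nonneg (by linarith : (0:ℝ) ≤ 1 - L)
      (by nlinarith : (0:ℝ) ≤ L ^ 2 + 4 * L - 1)]
  have hkey : ((n : ℝ) + L) ^ 3 ≤ 8 * (L * (n : ℝ) ^ d) := by
    have h1 : (n : ℝ) + L ≤ (1 + L) * (n : ℝ) := by nlinarith
    have h2 : ((n : ℝ) + L) ^ 3 ≤ ((1 + L) * (n : ℝ)) ^ 3 := by
      apply pow_le_pow_left₀ (by positivity) h1
    calc ((n : ℝ) + L) ^ 3 ≤ (1 + L) ^ 3 * (n : ℝ) ^ 3 := by rw [← mul_pow]; exact h2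
      _ ≤ 8 * L * (n : ℝ) ^ 3 := by nlinarith [pow_pos hN0 3]
      _ ≤ 8 * (L * (n : ℝ) ^ d) := by nlinarith [hL0]
  have hT : 2 * ((n : ℝ) + L) ^ 3 / (L * (n : ℝ) ^ d) ≤ 16 := by
    rw [div_le_iff₀ hD]; nlinarith
  have hxx : 21 ≤ x ^ 3 - 2 * x := by
    nlinarith [mul_nonneg (by linarith : (0:ℝ) ≤ x - 3)
      (by nlinarith : (0:ℝ) ≤ x ^ 2 + 3 * x + 7)]
  have hx2 : 9 ≤ x ^ 2 := by nlinarith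
  nlinarith [mul_le_mul_of_nonneg_left hxx (by linarith : (0:ℝ) ≤ (n : ℝ) + 2 * L),
    hT, hx2, hN1, hL1, hL0]
end
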